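/- Under the hypotheses |{i : u_i ≥ 0}| ≥ κ, κ ≥ 2, G^S > ΔU_{ĸ̂}, the explicit profile r defined by r_i = −(T*/U^S)·u_i for i ≤ n, r_k = 0 for n < k < k*, and r_j = −(u_j − u*) for j ≥ k*, is zero-sum, stable, and satisfies T(r) = T*; moreover 0 < T* < U^S. -/
import Mathlib


open Finset

/-- `r ∈ S₀`: `r` is zero-sum and `∑_{i∈C}(u_i + r_i) ≥ 0` for every coalition `C`
with `|C| ≥ ĸ̂ = I - κ + 1` (characterization of stable promises contingent on the reform). -/
def inS0 {I : ℕ} (κ : ℕ) (u r : Fin I → ℝ) : Prop :=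
  (∑ i, r i = 0) ∧
  ∀ C : Finset (Fin I), I - κ + 1 ≤ C.card → 0 ≤ ∑ i ∈ C, (u i + r i)

/-- Total promises transfer `T(r) = (1/2) ∑_i |r_i|`. -/
noncomputable def totT {I : ℕ} (r : Fin I → ℝ) : ℝ := (∑ i, |r i|) / 2

/-- `r ∈ E`: `r` is stable and minimizes the total transfer over `S₀`. -/
def inE {I : ℕ} (κ : ℕ) (u r : Fin I → ℝ) : Prop :=
  inS0 κ u r ∧ ∀ r' : Fin I → ℝ, inS0 κ u r' → totT r ≤ totT r'

/-- the explicit profile `r_i = (T*/U^S)(-u_i)` for `i ≤ n`, `r_k = 0`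
for `n < k < k*`, `r_j = -(u_j - u*)` for `j ≥ k*` is zero-sum, stable, and has
total transfer `T*`, where `0 < T* < U^S`. -/
theorem explicit_stable_profile {I : ℕ} (κ : ℕ) (hκ : 2 ≤ κ) (hκI : κ ≤ I)
    (u : Fin I → ℝ) (hmono : Monotone u) (hu : 0 < ∑ i, u i)
    (hsupp : κ ≤ (univ.filter (fun i : Fin I => 0 ≤ u i)).card)
    (n : ℕ) (hn : n = (univ.filter (fun i : Fin I => u i < 0)).card)
    (GS ustar US : ℝ)
    (hGS : GS = -∑ i ∈ univ.filter (fun i : Fin I => (i : ℕ) < I - κ + 1), u i)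
    (hustar : ustar = (∑ j, u j) / ((κ : ℝ) - 1))
    (hUS : US = ∑ i ∈ univ.filter (fun i : Fin I => (i : ℕ) < n), (-u i))
    (hGSgt : ∑ j ∈ univ.filter (fun j : Fin I => I - κ + 1 ≤ (j : ℕ)),
        (u j - u ⟨I - κ, by omega⟩) < GS) :
    ∀ k : Fin I, n ≤ (k : ℕ) → (k : ℕ) < I - κ + 1 →
      (∀ i : Fin I, i < k → u i ≤ ustar) → ustar < u k →
      ∀ Tstar : ℝ,
        Tstar = ∑ j ∈ univ.filter (fun j : Fin I => k ≤ j), (u j - ustar) →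
        ∀ r : Fin I → ℝ,
          (∀ i : Fin I, (i : ℕ) < n → r i = (Tstar / US) * (-u i)) →
          (∀ i : Fin I, n ≤ (i : ℕ) → i < k → r i = 0) →
          (∀ j : Fin I, k ≤ j → r j = -(u j - ustar)) →
          inS0 κ u r ∧ totT r = Tstar ∧ 0 < Tstar ∧ Tstar < US := by
  intro k hnk hkκ hle hgt Tstar hTstar r hr1 hr2 hr3
  have hI : 0 < I := by omega
  have hκ1 : (2:ℝ) ≤ (κ:ℝ) := by exact_mod_cast hκ
  have hustar_pos : 0 < ustar := by
    rw [hustar]; exact div_pos hu (by linarith)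
  -- characterization of negative-intensity individuals
  have hneg : ∀ i : Fin I, u i < 0 ↔ (i:ℕ) < n := by
    intro i
    constructor
    · intro hi
      have hsub : Finset.Iic i ⊆ univ.filter (fun j : Fin I => u j < 0) := by
        intro j hj
        simp only [Finset.mem_Iic] at hj
        simp only [Finset.mem_filter, Finset.mem_univ, true_and]
        exact lt_of_le_of_lt (hmono hj) hi
      have h := Finset.card_le_card hsub
      rw [Fin.card_Iic] at h
      omega
    · intro hi
      by_contra h
      push_neg at h
      have hsub : univ.filter (fun j : Fin I => u j < 0) ⊆ Finset.Iio i := by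
        intro j hj
        simp only [Finset.mem_filter, Finset.mem_univ, true_and] at hj
        simp only [Finset.mem_Iio]
        by_contra hj2
        push_neg at hj2
        exact absurd (le_trans h (hmono hj2)) (not_le.2 hj)
      have h2 := Finset.card_le_card hsub
      rw [Fin.card_Iio] at h2
      omega
  have hGSpos : 0 < GS := by
    refine lt_of_le_of_lt ?_ hGSgt
    apply Finset.sum_nonneg
    intro j hj
    simp only [mem_filter, mem_univ, true_and] at hj
    have hle' : (⟨I - κ, by omega⟩ : Fin I) ≤ j := by
      simp only [Fin.le_def]; omega
    have := hmono hle'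
    linarith
  have hnpos : 0 < n := by
    by_contra h
    push_neg at h
    have h0 : ∀ i : Fin I, 0 ≤ u i := by
      intro i
      by_contra hc
      push_neg at hc
      have := (hneg i).1 hc
      omega
    have hnn : 0 ≤ ∑ i ∈ univ.filter (fun i : Fin I => (i:ℕ) < I - κ + 1), u i :=
      Finset.sum_nonneg fun i _ => h0 i
    rw [hGS] at hGSpos
    linarith
  have hUSpos : 0 < US := by
    rw [hUS]
    apply Finset.sum_pos
    · intro i hi
      simp only [mem_filter, mem_univ, true_and] at hi
      have := (hneg i).2 hi
      linarith
    · exact ⟨⟨0, hI⟩, by simp [hnpos]⟩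
  -- sums split
  have hsplit : ∀ f : Fin I → ℝ, ∑ i, f i =
      (∑ i ∈ univ.filter (fun i : Fin I => (i:ℕ) < n), f i) +
      (∑ i ∈ univ.filter (fun i : Fin I => n ≤ (i:ℕ) ∧ (i:ℕ) < (k:ℕ)), f i) +
      (∑ i ∈ univ.filter (fun i : Fin I => (k:ℕ) ≤ (i:ℕ)), f i) := by
    intro f
    have h1 : ∑ i, f i = (∑ i ∈ univ.filter (fun i : Fin I => (i:ℕ) < n), f i) +
        (∑ i ∈ univ.filter (fun i : Fin I => ¬ (i:ℕ) < n), f i) :=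
      (Finset.sum_filter_add_sum_filter_not univ _ f).symm
    have h2 : univ.filter (fun i : Fin I => ¬ (i:ℕ) < n) =
        univ.filter (fun i : Fin I => n ≤ (i:ℕ) ∧ (i:ℕ) < (k:ℕ)) ∪
        univ.filter (fun i : Fin I => (k:ℕ) ≤ (i:ℕ)) := by
      ext i
      simp only [mem_filter, mem_union, mem_univ, true_and]
      omega
    have hdisj : Disjoint (univ.filter (fun i : Fin I => n ≤ (i:ℕ) ∧ (i:ℕ) < (k:ℕ)))
        (univ.filter (fun i : Fin I => (k:ℕ) ≤ (i:ℕ))) := by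
      rw [Finset.disjoint_left]
      intro a ha hb
      simp only [mem_filter, mem_univ, true_and] at ha hb
      omega
    rw [h1, h2, Finset.sum_union hdisj, add_assoc]
  have hfilk : univ.filter (fun j : Fin I => k ≤ j) =
      univ.filter (fun i : Fin I => (k:ℕ) ≤ (i:ℕ)) := by
    apply Finset.filter_congr
    intro j _
    exact Fin.le_def
  -- pieces of the sum of r
  have hS1r : ∑ i ∈ univ.filter (fun i : Fin I => (i:ℕ) < n), r i = Tstar := by
    have h : ∀ i ∈ univ.filter (fun i : Fin I => (i:ℕ) < n), r i = (Tstar/US) * (-u i) := by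
      intro i hi
      simp only [mem_filter, mem_univ, true_and] at hi
      exact hr1 i hi
    rw [Finset.sum_congr rfl h, ← Finset.mul_sum, ← hUS]
    exact div_mul_cancel₀ Tstar hUSpos.ne'
  have hS2r : ∑ i ∈ univ.filter (fun i : Fin I => n ≤ (i:ℕ) ∧ (i:ℕ) < (k:ℕ)), r i = 0 := by
    apply Finset.sum_eq_zero
    intro i hi
    simp only [mem_filter, mem_univ, true_and] at hi
    exact hr2 i hi.1 (by rw [Fin.lt_def]; exact hi.2)
  have hS3r : ∑ i ∈ univ.filter (fun i : Fin I => (k:ℕ) ≤ (i:ℕ)), r i = -Tstar := by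
    have h : ∀ i ∈ univ.filter (fun i : Fin I => (k:ℕ) ≤ (i:ℕ)), r i = -(u i - ustar) := by
      intro i hi
      simp only [mem_filter, mem_univ, true_and] at hi
      exact hr3 i (by rw [Fin.le_def]; exact hi)
    rw [Finset.sum_congr rfl h, Finset.sum_neg_distrib, hTstar, hfilk]
  have hsum0 : ∑ i, r i = 0 := by
    rw [hsplit r, hS1r, hS2r, hS3r]; ring
  -- cardinality of the top segment
  have hcard3 : (univ.filter (fun i : Fin I => (k:ℕ) ≤ (i:ℕ))).card = I - (k:ℕ) := by
    have h : univ.filter (fun i : Fin I => (k:ℕ) ≤ (i:ℕ)) = Finset.Ici k := by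
      ext i
      simp only [mem_filter, mem_univ, true_and, Finset.mem_Ici]
      exact Fin.le_def.symm
    rw [h, Fin.card_Ici]
  have hsumu : ∑ i, u i = ((κ:ℝ) - 1) * ustar := by
    have hne : (κ:ℝ) - 1 ≠ 0 := by linarith
    rw [hustar]
    field_simp
  have hTs : Tstar = (∑ i ∈ univ.filter (fun i : Fin I => (k:ℕ) ≤ (i:ℕ)), u i)
      - ((I - (k:ℕ) : ℕ) : ℝ) * ustar := by
    rw [hTstar, hfilk, Finset.sum_sub_distrib, Finset.sum_const, hcard3, nsmul_eq_mul]
  have hTpos : 0 < Tstar := by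
    rw [hTstar]
    apply Finset.sum_pos
    · intro j hj
      simp only [mem_filter, mem_univ, true_and] at hj
      have := hmono hj
      linarith
    · exact ⟨k, Finset.mem_filter.2 ⟨Finset.mem_univ k, le_refl k⟩⟩
  have hUSeq : US = -(∑ i ∈ univ.filter (fun i : Fin I => (i:ℕ) < n), u i) := by
    rw [hUS, Finset.sum_neg_distrib]
  have hS2nn : 0 ≤ ∑ i ∈ univ.filter (fun i : Fin I => n ≤ (i:ℕ) ∧ (i:ℕ) < (k:ℕ)), u i := by
    apply Finset.sum_nonneg
    intro i hi
    simp only [mem_filter, mem_univ, true_and] at hi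
    by_contra hc
    push_neg at hc
    have := (hneg i).1 hc
    omega
  have hIk : (κ:ℝ) ≤ ((I - (k:ℕ) : ℕ) : ℝ) := by
    have h : κ ≤ I - (k:ℕ) := by omega
    exact_mod_cast h
  have hTltUS : Tstar < US := by
    have hmul : (κ:ℝ) * ustar ≤ ((I - (k:ℕ) : ℕ) : ℝ) * ustar :=
      mul_le_mul_of_nonneg_right hIk hustar_pos.le
    have hsplitu := hsplit u
    rw [hsumu] at hsplitu
    rw [hTs, hUSeq]
    nlinarith [hS2nn, hustar_pos]
  -- total transfer
  have habs : totT r = Tstar := by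
    have e1 : ∀ i ∈ univ.filter (fun i : Fin I => (i:ℕ) < n), |r i| = (Tstar/US) * (-u i) := by
      intro i hi
      simp only [mem_filter, mem_univ, true_and] at hi
      rw [hr1 i hi]
      have hui := (hneg i).2 hi
      exact abs_of_nonneg (mul_nonneg (div_nonneg hTpos.le hUSpos.le) (by linarith))
    have e2 : ∀ i ∈ univ.filter (fun i : Fin I => n ≤ (i:ℕ) ∧ (i:ℕ) < (k:ℕ)), |r i| = 0 := by
      intro i hi
      simp only [mem_filter, mem_univ, true_and] at hi
      rw [hr2 i hi.1 (by rw [Fin.lt_def]; exact hi.2), abs_zero]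
    have e3 : ∀ i ∈ univ.filter (fun i : Fin I => (k:ℕ) ≤ (i:ℕ)), |r i| = u i - ustar := by
      intro i hi
      simp only [mem_filter, mem_univ, true_and] at hi
      rw [hr3 i (by rw [Fin.le_def]; exact hi), abs_neg]
      have hki : (k : Fin I) ≤ i := by rw [Fin.le_def]; exact hi
      have := hmono hki
      exact abs_of_nonneg (by linarith)
    have hs1 : ∑ i ∈ univ.filter (fun i : Fin I => (i:ℕ) < n), |r i| = Tstar := by
      rw [Finset.sum_congr rfl e1, ← Finset.mul_sum, ← hUS]
      exact div_mul_cancel₀ Tstar hUSpos.ne'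
    have hs2 : ∑ i ∈ univ.filter (fun i : Fin I => n ≤ (i:ℕ) ∧ (i:ℕ) < (k:ℕ)), |r i| = 0 :=
      Finset.sum_eq_zero e2
    have hs3 : ∑ i ∈ univ.filter (fun i : Fin I => (k:ℕ) ≤ (i:ℕ)), |r i| = Tstar := by
      rw [Finset.sum_congr rfl e3, hTstar, hfilk]
    unfold totT
    rw [hsplit (fun i => |r i|), hs1, hs2, hs3]
    ring
  -- every individual value is at most ustar
  have hval : ∀ i : Fin I, u i + r i ≤ ustar := by
    intro i
    rcases lt_or_ge (i:ℕ) n with h | h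
    · rw [hr1 i h]
      have hui : u i < 0 := (hneg i).2 h
      have hl1 : Tstar / US ≤ 1 := by
        rw [div_le_one hUSpos]; linarith
      have hl0 : 0 ≤ Tstar / US := div_nonneg hTpos.le hUSpos.le
      nlinarith [mul_nonneg (sub_nonneg.2 hl1) (neg_nonneg.2 hui.le)]
    · rcases lt_or_ge (i:ℕ) (k:ℕ) with h2 | h2
      · rw [hr2 i h (by rw [Fin.lt_def]; exact h2)]
        simpa using hle i (by rw [Fin.lt_def]; exact h2)
      · rw [hr3 i (by rw [Fin.le_def]; exact h2)]
        linarith [le_refl ustar]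
  -- stability
  have hstab : ∀ C : Finset (Fin I), I - κ + 1 ≤ C.card → 0 ≤ ∑ i ∈ C, (u i + r i) := by
    intro C hC
    have htot : ∑ i, (u i + r i) = ((κ:ℝ) - 1) * ustar := by
      rw [Finset.sum_add_distrib, hsum0, hsumu]; ring
    have hsc : ∑ i ∈ C, (u i + r i) + ∑ i ∈ Cᶜ, (u i + r i) = ((κ:ℝ) - 1) * ustar := by
      rw [Finset.sum_add_sum_compl, htot]
    have hcardc : Cᶜ.card ≤ κ - 1 := by
      have h1 : Cᶜ.card = Fintype.card (Fin I) - C.card := Finset.card_compl C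
      have h2 : C.card ≤ I := by
        have := Finset.card_le_univ C
        simpa using this
      rw [h1, Fintype.card_fin]
      omega
    have hcardR : ((Cᶜ.card : ℕ) : ℝ) ≤ (κ:ℝ) - 1 := by
      have h : ((Cᶜ.card : ℕ) : ℝ) ≤ ((κ - 1 : ℕ) : ℝ) := by exact_mod_cast hcardc
      have h2 : ((κ - 1 : ℕ) : ℝ) = (κ:ℝ) - 1 := by
        have : (1:ℕ) ≤ κ := by omega
        push_cast [this]
        ring
      linarith [h, h2.le, h2.ge]
    have hbound : ∑ i ∈ Cᶜ, (u i + r i) ≤ (Cᶜ.card : ℝ) * ustar := by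
      have h := Finset.sum_le_card_nsmul Cᶜ (fun i => u i + r i) ustar (fun i _ => hval i)
      rw [nsmul_eq_mul] at h
      exact h
    have hmul : ((Cᶜ.card : ℕ) : ℝ) * ustar ≤ ((κ:ℝ) - 1) * ustar :=
      mul_le_mul_of_nonneg_right hcardR hustar_pos.le
    linarith
  exact ⟨⟨hsum0, hstab⟩, habs, hTpos, hTltUS⟩
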